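/- With Sₘ as computed by the SumsetScheduler recursion (S₀ = {0}, Sᵢ = {x ∈ S_{i−1} ⊕ 𝒮(Xᵢ) : x ≤ d⁽ⁱ⁾}), the minimum total processing time of tardy jobs over all schedules equals P − max(Sₘ), where P = Σⱼ pⱼ. -/

import Mathlib

/-- The set of all sub-multiset sums of a multiset of natural numbers. -/
def subsetSums (X : Multiset ℕ) : Set ℕ := {s | ∃ Y ≤ X, Y.sum = s}

/-- The SumsetScheduler recursion: `S₀ = {0}` and
`Sᵢ = {x ∈ S_{i−1} ⊕ 𝒮(Xᵢ) : x ≤ d⁽ⁱ⁾}`. -/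
def Srec (d : ℕ → ℕ) (X : ℕ → Multiset ℕ) : ℕ → Set ℕ
  | 0 => {0}
  | i + 1 => {x | (∃ a ∈ Srec d X i, ∃ b ∈ subsetSums (X (i + 1)), x = a + b) ∧
      x ≤ d (i + 1)}

/-- Completion time of job `j` in schedule `σ`. -/
def completion (n : ℕ) (p : Fin n → ℕ) (σ : Equiv.Perm (Fin n)) (j : Fin n) : ℕ :=
  ∑ i ∈ Finset.univ.filter (fun i => σ i ≤ σ j), p i

/-- The objective `Σ pⱼUⱼ`: total processing time of tardy jobs in `σ`, where job `j` has
due date `due j`. -/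
def cost (n : ℕ) (p due : Fin n → ℕ) (σ : Equiv.Perm (Fin n)) : ℕ :=
  ∑ j ∈ Finset.univ.filter (fun j => due j < completion n p σ j), p j

/-!
A set `A` of jobs can be completed on time iff it passes the earliest-due-date test: for every
class `c`, the jobs of `A` of class at most `c` have total processing time at most `d c`. The
on-time jobs of any schedule pass this test, and conversely the EDD order (jobs of `A` by class,
then the rest) makes every job of such an `A` on time. By induction on `i`, `Sᵢ` is exactly the
set of loads of job sets of classes `≤ i` passing the test, so `max Sₘ` is the largest on-time
load and the tardy load is `P - max Sₘ`.
-/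

open Finset

theorem Multiset.exists_le_map_eq {α β : Type*} {f : α → β} {s : Multiset α} {Y : Multiset β}
    (h : Y ≤ s.map f) : ∃ t ≤ s, t.map f = Y := by
  induction s using Quotient.inductionOn
  induction Y using Quotient.inductionOn
  obtain ⟨l, hperm, hsub⟩ := Multiset.coe_le.mp h
  obtain ⟨l', hl', rfl⟩ := List.sublist_map_iff.mp hsub
  exact ⟨l', Multiset.coe_le.mpr hl'.subperm, Multiset.coe_eq_coe.mpr hperm⟩

theorem mem_subsetSums_map_iff {α : Type*} (s : Finset α) (p : α → ℕ) (b : ℕ) :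
    b ∈ subsetSums (s.val.map p) ↔ ∃ t ⊆ s, ∑ j ∈ t, p j = b := by
  constructor
  · rintro ⟨Y, hY, rfl⟩
    obtain ⟨t, hts, rfl⟩ := Multiset.exists_le_map_eq hY
    exact ⟨⟨t, Multiset.nodup_of_le hts s.nodup⟩, val_le_iff.mp hts, rfl⟩
  · rintro ⟨t, hts, rfl⟩
    exact ⟨t.val.map p, Multiset.map_le_map (val_le_iff.mpr hts), rfl⟩

theorem zero_mem_Srec (d : ℕ → ℕ) (X : ℕ → Multiset ℕ) (i : ℕ) : 0 ∈ Srec d X i := by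
  induction i with
  | zero => rfl
  | succ i ih => exact ⟨⟨0, ih, 0, ⟨0, Multiset.zero_le _, rfl⟩, rfl⟩, Nat.zero_le _⟩

theorem bddAbove_Srec (d : ℕ → ℕ) (X : ℕ → Multiset ℕ) (i : ℕ) : BddAbove (Srec d X i) := by
  cases i with
  | zero => exact bddAbove_singleton
  | succ i => exact ⟨d (i + 1), fun _ hx => hx.2⟩

section ClassFeasible

variable {n : ℕ} (p : Fin n → ℕ) (d : ℕ → ℕ) (cls : Fin n → ℕ)

/-- The earliest-due-date test for a job set `A` using only the classes `1, …, i`. -/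
def ClassFeasible (i : ℕ) (A : Finset (Fin n)) : Prop :=
  (∀ j ∈ A, cls j ≤ i) ∧ ∀ c ∈ Set.Icc 1 i, ∑ j ∈ A with cls j ≤ c, p j ≤ d c

variable {p d cls}

theorem classFeasible_zero_iff (hcls : ∀ j, 1 ≤ cls j) {A : Finset (Fin n)} :
    ClassFeasible p d cls 0 A ↔ A = ∅ := by
  constructor
  · rintro ⟨hA, -⟩
    exact eq_empty_of_forall_notMem fun j hj => by have := hA j hj; have := hcls j; omega
  · rintro rfl
    exact ⟨by simp, by simp⟩

theorem disjoint_of_cls_le_of_cls_eq {i : ℕ} {A T : Finset (Fin n)} (hA : ∀ j ∈ A, cls j ≤ i)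
    (hT : ∀ j ∈ T, cls j = i + 1) : Disjoint A T :=
  disjoint_left.2 fun j hjA hjT => by have := hA j hjA; have := hT j hjT; omega

theorem classFeasible_union_iff {i : ℕ} {A T : Finset (Fin n)} (hA : ∀ j ∈ A, cls j ≤ i)
    (hT : ∀ j ∈ T, cls j = i + 1) :
    ClassFeasible p d cls (i + 1) (A ∪ T) ↔
      ClassFeasible p d cls i A ∧ ∑ j ∈ A ∪ T, p j ≤ d (i + 1) := by
  have hle : ∀ j ∈ A ∪ T, cls j ≤ i + 1 := by
    intro j hj
    rcases mem_union.1 hj with h | h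
    · exact (hA j h).trans i.le_succ
    · exact (hT j h).le
  have hlow : ∀ c ≤ i, (A ∪ T).filter (cls · ≤ c) = A.filter (cls · ≤ c) := by
    intro c hc
    rw [filter_union, filter_false_of_mem (s := T) fun j hj => by rw [hT j hj]; omega, union_empty]
  have htop : (A ∪ T).filter (cls · ≤ i + 1) = A ∪ T := filter_true_of_mem hle
  constructor
  · rintro ⟨-, hfit⟩
    refine ⟨⟨hA, fun c hc => ?_⟩, ?_⟩
    · rw [← hlow c hc.2]
      exact hfit c ⟨hc.1, hc.2.trans i.le_succ⟩
    · rw [← htop]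
      exact hfit (i + 1) ⟨by omega, le_rfl⟩
  · rintro ⟨⟨-, hfit⟩, hsum⟩
    refine ⟨hle, fun c hc => ?_⟩
    rcases Nat.lt_or_ge c (i + 1) with hci | hci
    · rw [hlow c (Nat.le_of_lt_succ hci)]
      exact hfit c ⟨hc.1, Nat.le_of_lt_succ hci⟩
    · obtain rfl : c = i + 1 := le_antisymm hc.2 hci
      rwa [htop]

theorem mem_Srec_iff {X : ℕ → Multiset ℕ} (hcls : ∀ j, 1 ≤ cls j)
    (hX : ∀ i, X i = Multiset.map p (univ.filter (fun j => cls j = i)).val) (i x : ℕ) :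
    x ∈ Srec d X i ↔ ∃ A, ClassFeasible p d cls i A ∧ ∑ j ∈ A, p j = x := by
  induction i generalizing x with
  | zero => simp [Srec, classFeasible_zero_iff hcls, eq_comm]
  | succ i ih =>
    simp only [Srec, Set.mem_ofPred_eq, hX, mem_subsetSums_map_iff, ih]
    constructor
    · rintro ⟨⟨_, ⟨A, hA, rfl⟩, _, ⟨T, hT, rfl⟩, rfl⟩, hfit⟩
      have hTcls : ∀ j ∈ T, cls j = i + 1 := fun j hj => (mem_filter.1 (hT hj)).2
      have hsum := sum_union (f := p) (disjoint_of_cls_le_of_cls_eq hA.1 hTcls)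
      exact ⟨A ∪ T, (classFeasible_union_iff hA.1 hTcls).2 ⟨hA, hsum ▸ hfit⟩, hsum⟩
    · rintro ⟨B, hB, rfl⟩
      set A := B.filter (cls · ≤ i)
      set T := B.filter (¬cls · ≤ i)
      have hAcls : ∀ j ∈ A, cls j ≤ i := fun j hj => (mem_filter.1 hj).2
      have hTcls : ∀ j ∈ T, cls j = i + 1 := fun j hj => by
        have := hB.1 j (mem_filter.1 hj).1; have := (mem_filter.1 hj).2; omega
      have hB' : A ∪ T = B := filter_union_filter_not_eq _ B
      rw [← hB'] at hB ⊢
      obtain ⟨hA, hfit⟩ := (classFeasible_union_iff hAcls hTcls).1 hB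
      refine ⟨⟨_, ⟨A, hA, rfl⟩, _, ⟨T, fun j hj => ?_, rfl⟩, ?_⟩, hfit⟩
      · exact mem_filter.2 ⟨mem_univ _, hTcls j hj⟩
      · exact sum_union (disjoint_of_cls_le_of_cls_eq hAcls hTcls)

end ClassFeasible

section Schedule

variable {n : ℕ} (p : Fin n → ℕ)

def onTime (due : Fin n → ℕ) (σ : Equiv.Perm (Fin n)) : Finset (Fin n) :=
  univ.filter fun j => completion n p σ j ≤ due j

variable {p}

theorem cost_add_sum_onTime (due : Fin n → ℕ) (σ : Equiv.Perm (Fin n)) :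
    cost n p due σ + ∑ j ∈ onTime p due σ, p j = ∑ j, p j := by
  simp only [cost, onTime, ← not_lt]
  exact sum_filter_add_sum_filter_not _ _ _

theorem sum_le_of_subset_onTime {due : Fin n → ℕ} {σ : Equiv.Perm (Fin n)} {B : Finset (Fin n)}
    {D : ℕ} (hB : B ⊆ onTime p due σ) (hD : ∀ j ∈ B, due j ≤ D) : ∑ j ∈ B, p j ≤ D := by
  rcases B.eq_empty_or_nonempty with rfl | hne
  · simp
  obtain ⟨j, hj, hlast⟩ := B.exists_max_image σ hne
  calc ∑ i ∈ B, p i ≤ completion n p σ j :=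
        sum_le_sum_of_subset fun i hi => mem_filter.2 ⟨mem_univ _, hlast i hi⟩
    _ ≤ due j := (mem_filter.1 (hB hj)).2
    _ ≤ D := hD j hj

variable {d : ℕ → ℕ} {cls : Fin n → ℕ} {m : ℕ}

theorem classFeasible_onTime (hd : MonotoneOn d (Set.Icc 1 m))
    (hcls : ∀ j, cls j ∈ Set.Icc 1 m) (σ : Equiv.Perm (Fin n)) :
    ClassFeasible p d cls m (onTime p (fun j => d (cls j)) σ) :=
  ⟨fun j _ => (hcls j).2, fun _ hc => sum_le_of_subset_onTime (filter_subset _ _)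
    fun j hj => hd (hcls j) hc (mem_filter.1 hj).2⟩

theorem exists_subset_onTime_of_classFeasible (hcls : ∀ j, cls j ∈ Set.Icc 1 m)
    {A : Finset (Fin n)} (hA : ClassFeasible p d cls m A) :
    ∃ σ, A ⊆ onTime p (fun j => d (cls j)) σ := by
  classical
  let key : Fin n → ℕ := fun j => if j ∈ A then cls j else m + 1
  let σ := (Tuple.sort key).symm
  have hkey : ∀ i j, σ i ≤ σ j → key i ≤ key j := fun i j h => by
    simpa [σ] using Tuple.monotone_sort key h
  refine ⟨σ, fun j hj => mem_filter.2 ⟨mem_univ _, ?_⟩⟩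
  have hbefore : univ.filter (fun i => σ i ≤ σ j) ⊆ A.filter (cls · ≤ cls j) := by
    intro i hi
    have hij := hkey i j (mem_filter.1 hi).2
    by_cases hiA : i ∈ A
    · simp only [key, if_pos hiA, if_pos hj] at hij
      exact mem_filter.2 ⟨hiA, hij⟩
    · simp only [key, if_neg hiA, if_pos hj] at hij
      have := (hcls j).2
      omega
  exact (sum_le_sum_of_subset hbefore).trans (hA.2 _ (hcls j))

end Schedule

theorem sumsetScheduler_correct_general (n m : ℕ) (p : Fin n → ℕ) (d : ℕ → ℕ)
    (hd : StrictMonoOn d (Set.Icc 1 m))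
    (cls : Fin n → ℕ) (hcls : ∀ j, cls j ∈ Set.Icc 1 m)
    (X : ℕ → Multiset ℕ)
    (hX : ∀ i, X i = Multiset.map p (Finset.univ.filter (fun j => cls j = i)).val) :
    IsLeast {c | ∃ σ : Equiv.Perm (Fin n), c = cost n p (fun j => d (cls j)) σ}
      ((∑ j, p j) - sSup (Srec d X m)) := by
  have hmem := mem_Srec_iff (d := d) (hcls := fun j => (hcls j).1) hX m
  have hbdd := bddAbove_Srec d X m
  have honTime_le : ∀ σ, ∑ j ∈ onTime p (fun j => d (cls j)) σ, p j ≤ sSup (Srec d X m) :=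
    fun σ => le_csSup hbdd ((hmem _).2 ⟨_, classFeasible_onTime hd.monotoneOn hcls σ, rfl⟩)
  constructor
  · obtain ⟨A, hA, hAsum⟩ := (hmem _).1 (Nat.sSup_mem ⟨0, zero_mem_Srec d X m⟩ hbdd)
    obtain ⟨σ, hσ⟩ := exists_subset_onTime_of_classFeasible hcls hA
    have hA_le := sum_le_sum_of_subset (f := p) hσ
    have hsplit := cost_add_sum_onTime (p := p) (fun j => d (cls j)) σ
    have := honTime_le σ
    exact ⟨σ, by omega⟩
  · rintro _ ⟨σ, rfl⟩
    have hsplit := cost_add_sum_onTime (p := p) (fun j => d (cls j)) σ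
    have := honTime_le σ
    omega

/-- The minimum total processing time of tardy jobs over all schedules equals
`P − max(Sₘ)`, where `Sₘ` is computed by the SumsetScheduler recursion. Job `j` has class
`cls j ∈ {1,…,m}`, due date `d (cls j)`, the `d` values are strictly increasing on
`{1,…,m}`, every class occurs, and `Xᵢ` is the multiset of processing times of class-`i`
jobs. -/
theorem sumsetScheduler_correct (n m : ℕ) (p : Fin n → ℕ) (d : ℕ → ℕ)
    (hd : StrictMonoOn d (Set.Icc 1 m))
    (cls : Fin n → ℕ) (hcls : ∀ j, cls j ∈ Set.Icc 1 m)
    (hsurj : ∀ i ∈ Set.Icc 1 m, ∃ j, cls j = i)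
    (X : ℕ → Multiset ℕ)
    (hX : ∀ i, X i = Multiset.map p (Finset.univ.filter (fun j => cls j = i)).val) :
    IsLeast {c | ∃ σ : Equiv.Perm (Fin n), c = cost n p (fun j => d (cls j)) σ}
      ((∑ j, p j) - sSup (Srec d X m)) :=
  sumsetScheduler_correct_general n m p d hd cls hcls X hX
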